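/- Cross-difference identification of the local average controlled spillover effect on a rectangle (Theorem 3.1, item 3, spillover, d = 1): let 0 ≤ p₀ < p₀' ≤ 1 and 0 ≤ p₁ < p₁' ≤ 1 with ℙ(p₀ < V₀ ≤ p₀' and p₁ < V₁ ≤ p₁') > 0. Then [C(p₀',p₁') − C(p₀',p₁)] − [C(p₀,p₁') − C(p₀,p₁)] = ℙ(p₀ < V₀ ≤ p₀' and p₁ < V₁ ≤ p₁'), and ([F¹(p₀',p₁') − F¹(p₀',p₁)] − [F¹(p₀,p₁') − F¹(p₀,p₁)]) / ([C(p₀',p₁') − C(p₀',p₁)] − [C(p₀,p₁') − C(p₀,p₁)]) = 𝔼[ m(1,1,U) − m(1,0,U) | p₀ < V₀ ≤ p₀' and p₁ < V₁ ≤ p₁' ]. -/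

import Mathlib

/-!
Both cross differences are inclusion–exclusion for the rectangle
`{p₀ < V₀ ≤ p₀'} ∩ {p₁ < V₁ ≤ p₁'}` applied to the signed measure `s ↦ ∫ in s, g`: with `g = 1`
for the copula, and with `g = m(1,1,U) - m(1,0,U)` for `F¹`, since
`F¹(p, q) = ∫ in {V₀ ≤ p, V₁ ≤ q}, (m(1,1,U) - m(1,0,U)) + ∫ in {V₀ ≤ p}, m(1,0,U)` and the
last term, independent of `q`, cancels.
-/

open MeasureTheory

section

variable {Ω : Type*} [MeasurableSpace Ω] {μ : Measure Ω}

theorem setIntegral_sdiff_inter_sdiff {E : Type*} [NormedAddCommGroup E] [NormedSpace ℝ E]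
    {f : Ω → E} (hf : Integrable f μ) {A A' B B' : Set Ω}
    (hA : MeasurableSet A) (hA' : MeasurableSet A') (hB : MeasurableSet B)
    (hB' : MeasurableSet B') (hAA' : A ⊆ A') (hBB' : B ⊆ B') :
    ∫ ω in (A' \ A) ∩ (B' \ B), f ω ∂μ
      = ((∫ ω in A' ∩ B', f ω ∂μ) - ∫ ω in A' ∩ B, f ω ∂μ)
        - ((∫ ω in A ∩ B', f ω ∂μ) - ∫ ω in A ∩ B, f ω ∂μ) := by
  have h_strip : ∀ S, MeasurableSet S →
      ∫ ω in S ∩ (B' \ B), f ω ∂μ = (∫ ω in S ∩ B', f ω ∂μ) - ∫ ω in S ∩ B, f ω ∂μ :=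
    fun S hS => by
      rw [Set.inter_sdiff_distrib_left,
        setIntegral_sdiff (hS.inter hB) hf.integrableOn (Set.inter_subset_inter_right _ hBB')]
  rw [Set.inter_sdiff_distrib_right, setIntegral_sdiff (hA.inter (hB'.diff hB)) hf.integrableOn
    (Set.inter_subset_inter_left _ hAA'), h_strip A' hA', h_strip A hA]

theorem setIntegral_lowerOrthant_cross_sub {E : Type*} [NormedAddCommGroup E] [NormedSpace ℝ E]
    {X Y : Ω → ℝ} (hX : Measurable X) (hY : Measurable Y) {f : Ω → E} (hf : Integrable f μ)
    {p p' q q' : ℝ} (hp : p ≤ p') (hq : q ≤ q') :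
    ((∫ ω in {ω | X ω ≤ p' ∧ Y ω ≤ q'}, f ω ∂μ) - ∫ ω in {ω | X ω ≤ p' ∧ Y ω ≤ q}, f ω ∂μ)
      - ((∫ ω in {ω | X ω ≤ p ∧ Y ω ≤ q'}, f ω ∂μ) - ∫ ω in {ω | X ω ≤ p ∧ Y ω ≤ q}, f ω ∂μ)
      = ∫ ω in {ω | p < X ω ∧ X ω ≤ p' ∧ q < Y ω ∧ Y ω ≤ q'}, f ω ∂μ := by
  have h_rect : {ω | p < X ω ∧ X ω ≤ p' ∧ q < Y ω ∧ Y ω ≤ q'}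
      = ({ω | X ω ≤ p'} \ {ω | X ω ≤ p}) ∩ ({ω | Y ω ≤ q'} \ {ω | Y ω ≤ q}) := by
    ext ω
    simp only [Set.mem_ofPred_eq, Set.mem_inter_iff, Set.mem_sdiff, not_le]
    tauto
  rw [h_rect]
  exact (setIntegral_sdiff_inter_sdiff hf (hX measurableSet_Iic) (hX measurableSet_Iic)
    (hY measurableSet_Iic) (hY measurableSet_Iic) (fun ω h => le_trans h hp)
    (fun ω h => le_trans h hq)).symm

theorem measureReal_lowerOrthant_cross_sub [IsFiniteMeasure μ]
    {X Y : Ω → ℝ} (hX : Measurable X) (hY : Measurable Y)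
    {p p' q q' : ℝ} (hp : p ≤ p') (hq : q ≤ q') :
    (μ.real {ω | X ω ≤ p' ∧ Y ω ≤ q'} - μ.real {ω | X ω ≤ p' ∧ Y ω ≤ q})
      - (μ.real {ω | X ω ≤ p ∧ Y ω ≤ q'} - μ.real {ω | X ω ≤ p ∧ Y ω ≤ q})
      = μ.real {ω | p < X ω ∧ X ω ≤ p' ∧ q < Y ω ∧ Y ω ≤ q'} := by
  simpa using setIntegral_lowerOrthant_cross_sub (μ := μ) hX hY (integrable_const (1 : ℝ)) hp hq

theorem integral_mul_ite_mul_ite {P Q : Ω → Prop} [DecidablePred P] [DecidablePred Q]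
    (hP : MeasurableSet {ω | P ω}) (hQ : MeasurableSet {ω | Q ω}) (f : Ω → ℝ) :
    ∫ ω, f ω * (if P ω then 1 else 0) * (if Q ω then 1 else 0) ∂μ
      = ∫ ω in {ω | P ω ∧ Q ω}, f ω ∂μ := by
  rw [← integral_indicator (show MeasurableSet {ω | P ω ∧ Q ω} from hP.inter hQ)]
  congr with ω
  by_cases hPω : P ω <;> by_cases hQω : Q ω <;> simp [Set.indicator, hPω, hQω]

theorem setIntegral_inter_add_setIntegral_sdiff {E : Type*} [NormedAddCommGroup E]
    [NormedSpace ℝ E] {f g : Ω → E} (hf : Integrable f μ) (hg : Integrable g μ)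
    {s t : Set Ω} (ht : MeasurableSet t) :
    (∫ ω in s ∩ t, f ω ∂μ) + ∫ ω in s \ t, g ω ∂μ
      = (∫ ω in s ∩ t, (f ω - g ω) ∂μ) + ∫ ω in s, g ω ∂μ := by
  rw [integral_sub hf.integrableOn hg.integrableOn,
    ← integral_inter_add_sdiff (s := s) ht hg.integrableOn]
  abel

end

theorem lacse_rectangle_identification
    {Ω 𝒰 : Type*} [MeasurableSpace Ω] [MeasurableSpace 𝒰]
    (μ : Measure Ω) [IsProbabilityMeasure μ]
    (U : Ω → 𝒰) (V₀ V₁ : Ω → ℝ)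
    (hU : Measurable U) (hV₀ : Measurable V₀) (hV₁ : Measurable V₁)
    -- bounded measurable outcome function (`true` codes treatment 1, `false` codes 0)
    (m : Bool → Bool → 𝒰 → ℝ) (hm : ∀ d d', Measurable (m d d'))
    (hm_bdd : ∃ B, ∀ d d' u, |m d d' u| ≤ B)
    -- the copula of (V₀, V₁)
    (C : ℝ → ℝ → ℝ)
    (hC : ∀ p q, C p q = (μ {ω | V₀ ω ≤ p ∧ V₁ ω ≤ q}).toReal)
    -- identified conditional-mean function F¹
    (F1 : ℝ → ℝ → ℝ)
    (hF1 : ∀ p q, F1 p q =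
      (∫ ω, m true true (U ω) * (if V₀ ω ≤ p then (1:ℝ) else 0)
        * (if V₁ ω ≤ q then (1:ℝ) else 0) ∂μ)
      + ∫ ω, m true false (U ω) * (if V₀ ω ≤ p then (1:ℝ) else 0)
        * (if q < V₁ ω then (1:ℝ) else 0) ∂μ)
    -- the propensity-score values
    (p₀ p₀' p₁ p₁' : ℝ) (hp₀lt : p₀ < p₀') (hp₁lt : p₁ < p₁')
    (E : Set Ω)
    (hE : E = {ω | p₀ < V₀ ω ∧ V₀ ω ≤ p₀' ∧ p₁ < V₁ ω ∧ V₁ ω ≤ p₁'}) :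
    (C p₀' p₁' - C p₀' p₁) - (C p₀ p₁' - C p₀ p₁) = (μ E).toReal ∧
    ((F1 p₀' p₁' - F1 p₀' p₁) - (F1 p₀ p₁' - F1 p₀ p₁))
      / ((C p₀' p₁' - C p₀' p₁) - (C p₀ p₁' - C p₀ p₁))
      = (∫ ω in E, (m true true (U ω) - m true false (U ω)) ∂μ) / (μ E).toReal := by
  subst hE
  obtain ⟨B, hB⟩ := hm_bdd
  have h_int : ∀ d d', Integrable (fun ω => m d d' (U ω)) μ := fun d d' =>
    .of_bound ((hm d d').comp hU).aestronglyMeasurable B (ae_of_all _ fun ω => hB d d' (U ω))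
  have hF1_split : ∀ p q, F1 p q
      = (∫ ω in {ω | V₀ ω ≤ p ∧ V₁ ω ≤ q}, (m true true (U ω) - m true false (U ω)) ∂μ)
        + ∫ ω in {ω | V₀ ω ≤ p}, m true false (U ω) ∂μ := by
    intro p q
    have h_compl : {ω | V₀ ω ≤ p ∧ q < V₁ ω} = {ω | V₀ ω ≤ p} \ {ω | V₁ ω ≤ q} := by
      ext ω
      simp
    rw [hF1, integral_mul_ite_mul_ite (measurableSet_le hV₀ measurable_const)
      (measurableSet_le hV₁ measurable_const), integral_mul_ite_mul_ite
      (measurableSet_le hV₀ measurable_const) (measurableSet_lt measurable_const hV₁), h_compl]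
    exact setIntegral_inter_add_setIntegral_sdiff (h_int true true) (h_int true false)
      (measurableSet_le hV₁ measurable_const)
  have hC_rect : (C p₀' p₁' - C p₀' p₁) - (C p₀ p₁' - C p₀ p₁)
      = (μ {ω | p₀ < V₀ ω ∧ V₀ ω ≤ p₀' ∧ p₁ < V₁ ω ∧ V₁ ω ≤ p₁'}).toReal := by
    simp only [hC]
    exact measureReal_lowerOrthant_cross_sub hV₀ hV₁ hp₀lt.le hp₁lt.le
  have hF1_rect : (F1 p₀' p₁' - F1 p₀' p₁) - (F1 p₀ p₁' - F1 p₀ p₁)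
      = ∫ ω in {ω | p₀ < V₀ ω ∧ V₀ ω ≤ p₀' ∧ p₁ < V₁ ω ∧ V₁ ω ≤ p₁'},
          (m true true (U ω) - m true false (U ω)) ∂μ := by
    rw [hF1_split p₀' p₁', hF1_split p₀' p₁, hF1_split p₀ p₁', hF1_split p₀ p₁]
    linear_combination setIntegral_lowerOrthant_cross_sub hV₀ hV₁
      ((h_int true true).sub (h_int true false)) hp₀lt.le hp₁lt.le
  exact ⟨hC_rect, by rw [hC_rect, hF1_rect]⟩
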